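/- (Spectrum of the next-generation matrix of the transmission model; key step of Theorem 3.) Let n ≥ 1 and μ_H, γ_H > 0. Let a, b ∈ ℝ^{2n}, let P be any 2n×2n real matrix, and let N be any 2×4 real matrix. Let e₁ = (1,0) ∈ ℝ², V_H = [[μ_H+γ_H, 0], [−γ_H, μ_H]], F_VH = e₁ aᵀ (the 2×2n matrix whose first row is aᵀ and whose second row is zero), and F_HV = b e₁ᵀ (the 2n×2 matrix whose first column is b and whose second column is zero). Let K be the (2n+6)×(2n+6) block matrix on the index set (2) ⊕ (2n) ⊕ (4) with block rows [0, F_VH·P, N], [F_HV·V_H⁻¹, 0, 0], [0, 0, 0]. Then the characteristic polynomial of K equals X^{2n+4} · (X² − c), where c = (aᵀ P b)/(μ_H+γ_H); in particular, if c ≥ 0 the eigenvalues of K are 0 and ±√c, and its spectral radius is √c. -/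

import Mathlib

open Matrix Polynomial

/-- The host transition matrix `V_H = [[μ_H+γ_H, 0], [−γ_H, μ_H]]`. -/
def VH (μH γH : ℝ) : Matrix (Fin 2) (Fin 2) ℝ := !![μH + γH, 0; -γH, μH]

/-- The next-generation matrix `K` of the transmission model, with block rows
`[0, F_VH·P, N]`, `[F_HV·V_H⁻¹, 0, 0]`, `[0, 0, 0]`, where `F_VH = e₁ aᵀ` and
`F_HV = b e₁ᵀ`. -/
noncomputable def Kmat (n : ℕ) (μH γH : ℝ) (a b : Fin (2 * n) → ℝ)
    (P : Matrix (Fin (2 * n)) (Fin (2 * n)) ℝ) (N : Matrix (Fin 2) (Fin 4) ℝ) :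
    Matrix (Fin 2 ⊕ (Fin (2 * n) ⊕ Fin 4)) (Fin 2 ⊕ (Fin (2 * n) ⊕ Fin 4)) ℝ :=
  Matrix.fromBlocks 0
    (Matrix.fromCols (Matrix.vecMulVec ![1, 0] a * P) N)
    (Matrix.fromRows (Matrix.vecMulVec b ![1, 0] * (VH μH γH)⁻¹) 0)
    0

/-! `K` is the antidiagonal block matrix `[[0, B], [C, 0]]` over `Fin 2 ⊕ (Fin (2n) ⊕ Fin 4)`,
and `B C = c • e₁ e₁ᵀ` is rank one because the first row of the lower-triangular `V_H⁻¹` is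
`e₁ᵀ / (μ_H + γ_H)`. Multiplying `X • 1 - K` on the left by `[[X, B], [0, X]]` gives a block
lower-triangular matrix with diagonal blocks `X² • 1 - B C` and `X² • 1`, whence
`X² χ_K(X) = X^(2n+4) χ_{BC}(X²) = X^(2n+4) X² (X² - c)`. -/

namespace Matrix

variable {R : Type*} [CommRing R] {m n : Type*}

theorem charpoly_comp [Fintype n] [DecidableEq n] (M : Matrix n n R) (p : R[X]) :
    M.charpoly.comp p = (scalar n p - M.map C).det := by
  rw [charpoly, ← coe_compRingHom_apply, RingHom.map_det]
  congr 1
  ext i j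
  by_cases h : i = j <;> simp [h]

theorem charpoly_fromBlocks_zero₁₁_zero₂₂ [Fintype m] [Fintype n] [DecidableEq m] [DecidableEq n]
    (A : Matrix m n R) (B : Matrix n m R) :
    X ^ Fintype.card m * (fromBlocks 0 A B 0).charpoly =
      X ^ Fintype.card n * (A * B).charpoly.comp (X ^ 2) := by
  set L : Matrix (m ⊕ n) (m ⊕ n) R[X] := fromBlocks (scalar m X) (A.map C) 0 (scalar n X)
  have hL : L.det = X ^ Fintype.card m * X ^ Fintype.card n := by
    simp [L, det_fromBlocks_zero₂₁]
  have hLK : L * charmatrix (fromBlocks 0 A B 0) =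
      fromBlocks (scalar m (X ^ 2) - (A * B).map C) 0
        (-((X : R[X]) • B.map C)) (scalar n (X ^ 2)) := by
    simp [L, charmatrix_fromBlocks, fromBlocks_multiply, Matrix.map_mul, pow_two, sub_eq_add_neg,
      ← smul_eq_diagonal_mul, ← smul_eq_mul_diagonal, ← diagonal_smul]
  have hX2 : (scalar n ((X : R[X]) ^ 2)).det = X ^ Fintype.card n * X ^ Fintype.card n := by
    simp [← pow_add, ← pow_mul, two_mul]
  have h := congrArg det hLK
  rw [det_mul, hL, det_fromBlocks_zero₁₂, ← charpoly_comp, hX2] at h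
  rw [← (isRegular_X_pow (Fintype.card n)).left.eq_iff, charpoly]
  linear_combination h

theorem vecMulVec_mul_mul_vecMulVec {l o : Type*} [Fintype n] [Fintype l] (u : m → R) (a : n → R)
    (P : Matrix n l R) (b : l → R) (v : o → R) :
    vecMulVec u a * P * vecMulVec b v = (a ⬝ᵥ P *ᵥ b) • vecMulVec u v := by
  rw [Matrix.mul_assoc, mul_vecMulVec, vecMulVec_mul_vecMulVec, vecMulVec_smul]

theorem vecMul_inv_fin_two_of_lowerTriangular {K : Type*} [Field K] (p q r : K) (hr : r ≠ 0) :
    ![1, 0] ᵥ* (!![p, 0; q, r])⁻¹ = ![p⁻¹, 0] := by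
  rw [inv_def, adjugate_fin_two_of, det_fin_two_of]
  ext i
  fin_cases i <;> simp [vecMul, dotProduct, Ring.inverse_eq_inv']
  field_simp

theorem spectrum_eq_of_charpoly_eq_X_pow_mul_X_sq_sub_C {ι : Type*} [Fintype ι] [DecidableEq ι]
    {M : Matrix ι ι ℝ} {k : ℕ} (hk : k ≠ 0) {c : ℝ} (hc : 0 ≤ c)
    (h : M.charpoly = X ^ k * (X ^ 2 - C c)) :
    spectrum ℝ M = {0, √c, -√c} := by
  ext x
  rw [mem_spectrum_iff_isRoot_charpoly, h, ← Real.sq_sqrt hc]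
  simp [hk, sub_eq_zero, sq_eq_sq_iff_eq_or_eq_neg]

end Matrix

theorem spectralRadius_eq_ofReal_of_spectrum_eq {A : Type*} [Ring A] [Algebra ℝ A] {x : A} {s : ℝ}
    (hs : 0 ≤ s) (h : spectrum ℝ x = {0, s, -s}) :
    spectralRadius ℝ x = ENNReal.ofReal s := by
  rw [spectralRadius, h, iSup_insert, iSup_insert, iSup_singleton]
  simp only [nnnorm_zero, ENNReal.coe_zero, nnnorm_neg, max_self, zero_max]
  exact Real.enorm_eq_ofReal hs

theorem charpoly_Kmat (n : ℕ) {μH : ℝ} (γH : ℝ) (hμH : μH ≠ 0) (a b : Fin (2 * n) → ℝ)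
    (P : Matrix (Fin (2 * n)) (Fin (2 * n)) ℝ) (N : Matrix (Fin 2) (Fin 4) ℝ) :
    (Kmat n μH γH a b P N).charpoly =
      X ^ (2 * n + 4) * (X ^ 2 - C (a ⬝ᵥ (P *ᵥ b) / (μH + γH))) := by
  have hdot : ![1, 0] ⬝ᵥ (a ⬝ᵥ P *ᵥ b) • ![(μH + γH)⁻¹, 0] = a ⬝ᵥ P *ᵥ b / (μH + γH) := by
    simp [dotProduct, div_eq_mul_inv]
  rw [Kmat, ← (isRegular_X_pow (Fintype.card (Fin 2))).left.eq_iff,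
    charpoly_fromBlocks_zero₁₁_zero₂₂, fromCols_mul_fromRows, Matrix.mul_zero, add_zero,
    ← Matrix.mul_assoc, vecMulVec_mul_mul_vecMulVec, smul_mul, vecMulVec_mul, VH,
    vecMul_inv_fin_two_of_lowerTriangular _ _ _ hμH, ← vecMulVec_smul, charpoly_vecMulVec, hdot]
  simp only [Fintype.card_fin, Fintype.card_sum, Nat.add_one_sub_one, smul_eq_C_mul, sub_comp,
    mul_comp, pow_comp, X_comp, C_comp]
  ring

theorem ngm_transmission_charpoly_and_spectrum
    (n : ℕ) (μH γH : ℝ) (hμH : 0 < μH)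
    (a b : Fin (2 * n) → ℝ)
    (P : Matrix (Fin (2 * n)) (Fin (2 * n)) ℝ) (N : Matrix (Fin 2) (Fin 4) ℝ) :
    (Kmat n μH γH a b P N).charpoly =
      Polynomial.X ^ (2 * n + 4) *
        (Polynomial.X ^ 2 - Polynomial.C (a ⬝ᵥ (P *ᵥ b) / (μH + γH))) ∧
    (0 ≤ a ⬝ᵥ (P *ᵥ b) / (μH + γH) →
      spectrum ℝ (Kmat n μH γH a b P N) =
        {0, Real.sqrt (a ⬝ᵥ (P *ᵥ b) / (μH + γH)),
          -Real.sqrt (a ⬝ᵥ (P *ᵥ b) / (μH + γH))}) ∧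
    (0 ≤ a ⬝ᵥ (P *ᵥ b) / (μH + γH) →
      spectralRadius ℝ (Kmat n μH γH a b P N) =
        ENNReal.ofReal (Real.sqrt (a ⬝ᵥ (P *ᵥ b) / (μH + γH)))) := by
  have hchar := charpoly_Kmat n γH hμH.ne' a b P N
  have hspec := fun hc => spectrum_eq_of_charpoly_eq_X_pow_mul_X_sq_sub_C (by omega) hc hchar
  exact ⟨hchar, hspec, fun hc =>
    spectralRadius_eq_ofReal_of_spectrum_eq (Real.sqrt_nonneg _) (hspec hc)⟩
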